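/- Let T : 𝒰(𝔤) → 𝒰(𝔞) be an 𝒪-Hopf operator on the universal envelope of a right Lie module (𝔤, ◁, 𝔞). Then T is invertible for the product # with T^{#−1} = T ∘ S_{𝒰(𝔤)}, i.e. T # (T ∘ S) = η∘ε = (T ∘ S) # T, where (A # B)(f) = A(f₍₁₎ ◁◁ S_{𝒰(𝔞)}(B(f₍₂₎)₍₁₎)) B(f₍₂₎)₍₂₎. -/

import Mathlib

open TensorProduct

/-- The `#`-product of linear maps `A, B : H → K`:
`(A # B)(f) = A(f₍₁₎ ◁◁ S_K((B f₍₂₎)₍₁₎)) · (B f₍₂₎)₍₂₎`. -/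
noncomputable def hashMul {R H K : Type*} [CommRing R] [Ring H] [Ring K]
    [HopfAlgebra R H] [HopfAlgebra R K]
    (act : H →ₗ[R] K →ₗ[R] H) (A B : H →ₗ[R] K) : H →ₗ[R] K :=
  (LinearMap.mul' R K)
    ∘ₗ (TensorProduct.map A LinearMap.id)
    ∘ₗ (TensorProduct.map (TensorProduct.lift act) LinearMap.id)
    ∘ₗ (TensorProduct.map
          (TensorProduct.map LinearMap.id (HopfAlgebra.antipode (R := R))) LinearMap.id)
    ∘ₗ (TensorProduct.assoc R H K K).symm.toLinearMap
    ∘ₗ (TensorProduct.map LinearMap.id (Coalgebra.comul ∘ₗ B))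
    ∘ₗ Coalgebra.comul

/-- The product `e ⋆_T f := (e ◁◁ T f₍₁₎) f₍₂₎` on `H`. -/
noncomputable def starT {R H K : Type*} [CommRing R] [Ring H] [Ring K]
    [HopfAlgebra R H] [HopfAlgebra R K]
    (act : H →ₗ[R] K →ₗ[R] H) (T : H →ₗ[R] K) (e f : H) : H :=
  (LinearMap.mul' R H) ((TensorProduct.map ((act e) ∘ₗ T) LinearMap.id) (Coalgebra.comul f))


/-!
For a coalgebra map `B`, the product `A # B` is the convolution `(A ∘ (id ◁◁ S∘B)) ⋆ B`, and the
𝒪-Hopf identity turns `(T∘P) ⋆ (T∘Q)`, for a coalgebra map `Q`, into `T ∘ ((P ◁◁ T∘Q) ⋆ Q)`.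
As `◁◁` is a right action and `(S∘B) ⋆ B = η∘ε` for every coalgebra map `B`, the inner map
collapses to `id ⋆ S` for `T # (T∘S)` and to `S ⋆ id` for `(T∘S) # T`. Both are `η∘ε`, which `T`
fixes because `T 1` is a group-like idempotent. Cocommutativity of `H` is what makes `S_H`, hence
`T∘S_H`, a coalgebra map.
-/

open Coalgebra HopfAlgebra WithConv

namespace HopfAlgebra

variable {R A : Type*} [CommSemiring R] [Semiring A] [HopfAlgebra R A] [IsCocomm R A]

/-- By cocommutativity `δ` is a coalgebra map, so this is `(S ⊗ S) ⋆ id` composed with `δ`. -/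
theorem map_antipode_comp_comul_convMul_comul :
    toConv (map (antipode R) (antipode R) ∘ₗ comul (R := R) (A := A)) * toConv comul = 1 := by
  have hone : map (1 : WithConv (A →ₗ[R] A)).ofConv (1 : WithConv (A →ₗ[R] A)).ofConv =
      (1 : WithConv (A ⊗[R] A →ₗ[R] A ⊗[R] A)).ofConv := by
    ext
    simp [Algebra.algebraMap_eq_smul_one, mul_smul, Algebra.TensorProduct.one_def, smul_tmul]
  have hmap : toConv (map (antipode R (A := A)) (antipode R (A := A))) *
      toConv (map (LinearMap.id (R := R) (M := A)) LinearMap.id) = 1 := by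
    rw [← toConv_ofConv (1 : WithConv (A ⊗[R] A →ₗ[R] A ⊗[R] A)), ← hone,
      ← LinearMap.antipode_mul_id (R := R) (C := A)]
    exact TensorProduct.map_convMul_map
  have h := LinearMap.convMul_comp_coalgHom_distrib
    (toConv (map (antipode R (A := A)) (antipode R))) (toConv (map LinearMap.id LinearMap.id))
    (comulCoalgHom R A)
  rw [hmap, map_id, LinearMap.convOne_comp_coalgHom] at h
  exact ofConv_injective h.symm

theorem comul_comp_antipode :
    comul ∘ₗ antipode R (A := A) = map (antipode R) (antipode R) ∘ₗ comul := by
  have h := left_inv_eq_right_inv (M := WithConv (A →ₗ[R] A ⊗[R] A))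
    map_antipode_comp_comul_convMul_comul LinearMap.comul_right_inv
  exact congr(ofConv $h).symm

variable (R A) in
noncomputable def antipodeCoalgHom : A →ₗc[R] A where
  __ := antipode R
  counit_comp := counit_comp_antipode
  map_comp_comul := comul_comp_antipode.symm

end HopfAlgebra

theorem CoalgHom.antipode_comp_convMul_self {R C K : Type*} [CommSemiring R] [AddCommMonoid C]
    [Module R C] [Coalgebra R C] [Semiring K] [HopfAlgebra R K] (B : C →ₗc[R] K) :
    toConv (antipode R ∘ₗ (B : C →ₗ[R] K)) * toConv (B : C →ₗ[R] K) = 1 := by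
  have h := LinearMap.convMul_comp_coalgHom_distrib (toConv (antipode R)) (toConv .id) B
  rw [LinearMap.antipode_mul_id] at h
  apply ofConv_injective
  refine h.symm.trans ?_
  ext; simp

theorem LinearMap.comp_convOne_of_map_one {R C A B : Type*} [CommSemiring R] [AddCommMonoid C]
    [Module R C] [Coalgebra R C] [Semiring A] [Algebra R A] [Semiring B] [Algebra R B]
    (T : A →ₗ[R] B) (hT : T 1 = 1) :
    T ∘ₗ (1 : WithConv (C →ₗ[R] A)).ofConv = (1 : WithConv (C →ₗ[R] B)).ofConv := by
  ext; simp [Algebra.algebraMap_eq_smul_one, hT]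

section ActConv

variable {R C M K : Type*} [CommSemiring R] [AddCommMonoid C] [Module R C] [Coalgebra R C]
  [AddCommMonoid M] [Module R M] [Semiring K] [Algebra R K] (act : M →ₗ[R] K →ₗ[R] M)

/-- `actConv act P Q` is `c ↦ P c₍₁₎ ◁◁ Q c₍₂₎`. -/
noncomputable def actConv (P : C →ₗ[R] M) (Q : C →ₗ[R] K) : C →ₗ[R] M :=
  lift act ∘ₗ map P Q ∘ₗ comul

theorem actConv_actConv (hact : ∀ m k k', act (act m k) k' = act m (k * k'))
    (P : C →ₗ[R] M) (Q Q' : C →ₗ[R] K) :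
    actConv act (actConv act P Q) Q' = actConv act P (toConv Q * toConv Q').ofConv := by
  have hlift : lift act ∘ₗ map (lift act) LinearMap.id =
      lift act ∘ₗ (LinearMap.mul' R K).lTensor M ∘ₗ (TensorProduct.assoc R M K K).toLinearMap := by
    ext; simp [hact]
  simp only [actConv, LinearMap.convMul_def, ofConv_toConv]
  calc lift act ∘ₗ map (lift act ∘ₗ map P Q ∘ₗ comul) Q' ∘ₗ comul
      = (lift act ∘ₗ map (lift act) LinearMap.id) ∘ₗ map (map P Q) Q' ∘ₗ
          (comul (R := R)).rTensor C ∘ₗ comul := by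
        simp only [coassoc_simps]
    _ = lift act ∘ₗ map P (LinearMap.mul' R K ∘ₗ map Q Q' ∘ₗ comul) ∘ₗ comul := by
        rw [hlift]
        simp only [coassoc_simps]

theorem actConv_one (hact : ∀ m, act m 1 = m) (P : C →ₗ[R] M) :
    actConv act P (1 : WithConv (C →ₗ[R] K)).ofConv = P := by
  rw [actConv, LinearMap.convOne_def, ofConv_toConv, ← LinearMap.comp_id P, TensorProduct.map_comp,
    LinearMap.comp_assoc, CoassocSimps.map_counit_comp_comul_right]
  ext
  simp [hact]

theorem comp_actConv (g : M →ₗ[R] M) (hg : ∀ m k, g (act m k) = act (g m) k)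
    (P : C →ₗ[R] M) (Q : C →ₗ[R] K) :
    g ∘ₗ actConv act P Q = actConv act (g ∘ₗ P) Q := by
  have hlift : g ∘ₗ lift act = lift act ∘ₗ g.rTensor K := by
    ext; simp [hg]
  simp only [actConv, ← LinearMap.comp_assoc, hlift]
  simp only [coassoc_simps]

end ActConv

section OHopf

variable {R H K : Type*} [CommRing R] [Ring H] [Ring K] [HopfAlgebra R H] [HopfAlgebra R K]
  (act : H →ₗ[R] K →ₗ[R] H)

theorem hashMul_eq_convMul (A B : H →ₗ[R] K) (hB : map B B ∘ₗ comul = comul ∘ₗ B) :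
    hashMul act A B =
      (toConv (A ∘ₗ actConv act LinearMap.id (antipode R ∘ₗ B)) * toConv B).ofConv := by
  rw [hashMul, ← hB, LinearMap.convMul_def, ofConv_toConv, actConv]
  simp only [coassoc_simps]

variable {act} {T : H →ₗ[R] K} (hT : ∀ e f : H, T e * T f = T (starT act T e f))
include hT

theorem mul'_comp_map_of_starT :
    LinearMap.mul' R K ∘ₗ map T T = T ∘ₗ LinearMap.mul' R H ∘ₗ map (lift act) LinearMap.id ∘ₗ
      (TensorProduct.assoc R H K H).symm.toLinearMap ∘ₗ
        map LinearMap.id (map T LinearMap.id ∘ₗ comul) := by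
  refine TensorProduct.ext' fun e f => ?_
  simp only [LinearMap.comp_apply, map_tmul, LinearMap.mul'_apply, hT, starT]
  congr 1
  induction comul (R := R) f using TensorProduct.induction_on with
  | zero => simp
  | tmul => simp
  | add _ _ h₁ h₂ => simp only [map_add, tmul_add, h₁, h₂]

theorem comp_convMul_comp_of_starT (P Q : H →ₗ[R] H) (hQ : map Q Q ∘ₗ comul = comul ∘ₗ Q) :
    toConv (T ∘ₗ P) * toConv (T ∘ₗ Q) =
      toConv (T ∘ₗ (toConv (actConv act P (T ∘ₗ Q)) * toConv Q).ofConv) := by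
  simp only [LinearMap.convMul_def, ofConv_toConv, TensorProduct.map_comp]
  have h := congrArg (· ∘ₗ map P Q ∘ₗ comul) (mul'_comp_map_of_starT hT)
  simp only [LinearMap.comp_assoc] at h ⊢
  rw [h, actConv]
  simp only [coassoc_simps]
  rw [← hQ]
  simp only [coassoc_simps]

theorem map_one_of_starT (hone_act : ∀ k : K, act 1 k = counit (R := R) k • (1 : H))
    (hT1 : IsGroupLikeElem R (T 1)) : T 1 = 1 := by
  have hidem : T 1 * T 1 = T 1 := by
    simp [hT, starT, Algebra.TensorProduct.one_def, hone_act, hT1.counit_eq_one]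
  exact hT1.isUnit.mul_eq_left.mp hidem

end OHopf

theorem OHopf_operator_hash_inverse_general
    {R H K : Type*} [CommRing R] [Ring H] [Ring K]
    [HopfAlgebra R H] [HopfAlgebra R K]
    (hcoH : ∀ x : H, (TensorProduct.comm R H H) (Coalgebra.comul x) = Coalgebra.comul x)
    (act : H →ₗ[R] K →ₗ[R] H)
    (hact_one : ∀ h : H, act h 1 = h)
    (hone_act : ∀ k : K, act 1 k = Coalgebra.counit (R := R) k • (1 : H))
    (hact_comp : ∀ (h : H) (k k' : K), act (act h k) k' = act h (k * k'))
    (hact_antipode : ∀ (h : H) (k : K),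
      HopfAlgebra.antipode (R := R) (act h k) = act (HopfAlgebra.antipode (R := R) h) k)
    (T : H →ₗ[R] K)
    (hTcomul : ∀ e : H, Coalgebra.comul (T e) = (TensorProduct.map T T) (Coalgebra.comul e))
    (hTcounit : ∀ e : H, Coalgebra.counit (R := R) (T e) = Coalgebra.counit (R := R) e)
    (hT : ∀ e f : H, T e * T f = T (starT act T e f)) :
    hashMul act T (T ∘ₗ HopfAlgebra.antipode (R := R))
        = (Algebra.linearMap R K) ∘ₗ (Coalgebra.counit : H →ₗ[R] R) ∧
    hashMul act (T ∘ₗ HopfAlgebra.antipode (R := R)) T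
        = (Algebra.linearMap R K) ∘ₗ (Coalgebra.counit : H →ₗ[R] R) := by
  have : IsCocomm R H := ⟨LinearMap.ext hcoH⟩
  let Tc : H →ₗc[R] K :=
    { T with counit_comp := LinearMap.ext hTcounit, map_comp_comul := (LinearMap.ext hTcomul).symm }
  let TSc : H →ₗc[R] K := Tc.comp (antipodeCoalgHom R H)
  have hT_comul : map T T ∘ₗ comul = comul ∘ₗ T := (LinearMap.ext hTcomul).symm
  have hTS_comul : map (T ∘ₗ antipode R) (T ∘ₗ antipode R) ∘ₗ comul = comul ∘ₗ T ∘ₗ antipode R :=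
    TSc.map_comp_comul
  have hT1 : T 1 = 1 := map_one_of_starT hT hone_act (IsGroupLikeElem.one.map Tc)
  have hT_inv : toConv (antipode R ∘ₗ T) * toConv T = 1 := Tc.antipode_comp_convMul_self
  have hTS_inv : toConv (antipode R ∘ₗ T ∘ₗ antipode R) * toConv (T ∘ₗ antipode R) = 1 :=
    TSc.antipode_comp_convMul_self
  constructor
  · rw [hashMul_eq_convMul act _ _ hTS_comul,
      comp_convMul_comp_of_starT hT _ _ comul_comp_antipode.symm, actConv_actConv act hact_comp,
      hTS_inv, actConv_one act hact_one, LinearMap.id_mul_antipode,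
      LinearMap.comp_convOne_of_map_one T hT1]
    rfl
  · calc hashMul act (T ∘ₗ antipode R) T
        = (toConv (T ∘ₗ actConv act (antipode R) (antipode R ∘ₗ T)) *
            toConv (T ∘ₗ LinearMap.id)).ofConv := by
          rw [hashMul_eq_convMul act _ _ hT_comul, LinearMap.comp_assoc,
            comp_actConv act _ hact_antipode]
          rfl
      _ = (Algebra.linearMap R K) ∘ₗ counit := by
          rw [comp_convMul_comp_of_starT hT _ _ (by simp), actConv_actConv act hact_comp,
            LinearMap.comp_id, hT_inv, actConv_one act hact_one, LinearMap.antipode_mul_id,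
            LinearMap.comp_convOne_of_map_one T hT1]
          rfl

/-- An 𝒪-Hopf operator `T` on the universal envelope of a right Lie module
(a right Hopf module `(H, ◁◁, K)` of cocommutative Hopf algebras) is invertible for the
`#`-product, with `T^{#-1} = T ∘ S_H`: `T # (T∘S) = η∘ε = (T∘S) # T`. -/
theorem OHopf_operator_hash_inverse
    {R H K : Type*} [CommRing R] [Ring H] [Ring K]
    [HopfAlgebra R H] [HopfAlgebra R K]
    (hcoH : ∀ x : H, (TensorProduct.comm R H H) (Coalgebra.comul x) = Coalgebra.comul x)
    (hcoK : ∀ x : K, (TensorProduct.comm R K K) (Coalgebra.comul x) = Coalgebra.comul x)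
    (act : H →ₗ[R] K →ₗ[R] H)
    (hact_one : ∀ h : H, act h 1 = h)
    (hone_act : ∀ k : K, act 1 k = Coalgebra.counit (R := R) k • (1 : H))
    (hact_mul : ∀ (h₁ h₂ : H) (k : K),
      act (h₁ * h₂) k
        = (LinearMap.mul' R H) ((TensorProduct.map (act h₁) (act h₂)) (Coalgebra.comul k)))
    (hact_comp : ∀ (h : H) (k k' : K), act (act h k) k' = act h (k * k'))
    (hact_comul : ∀ (h : H) (k : K),
      Coalgebra.comul (act h k)
        = (TensorProduct.map (TensorProduct.lift act) (TensorProduct.lift act))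
            ((TensorProduct.tensorTensorTensorComm R H H K K)
              (Coalgebra.comul h ⊗ₜ[R] Coalgebra.comul k)))
    (hact_antipode : ∀ (h : H) (k : K),
      HopfAlgebra.antipode (R := R) (act h k) = act (HopfAlgebra.antipode (R := R) h) k)
    (T : H →ₗ[R] K)
    (hTcomul : ∀ e : H, Coalgebra.comul (T e) = (TensorProduct.map T T) (Coalgebra.comul e))
    (hTcounit : ∀ e : H, Coalgebra.counit (R := R) (T e) = Coalgebra.counit (R := R) e)
    (hT : ∀ e f : H, T e * T f = T (starT act T e f)) :
    hashMul act T (T ∘ₗ HopfAlgebra.antipode (R := R))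
        = (Algebra.linearMap R K) ∘ₗ (Coalgebra.counit : H →ₗ[R] R) ∧
    hashMul act (T ∘ₗ HopfAlgebra.antipode (R := R)) T
        = (Algebra.linearMap R K) ∘ₗ (Coalgebra.counit : H →ₗ[R] R) :=
  OHopf_operator_hash_inverse_general hcoH act hact_one hone_act hact_comp hact_antipode T hTcomul
    hTcounit hT
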